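/- Let K = |R| + (|R|+1)·(|S|−|R|+1). With B_M and y_T as defined for safe positive reachability, B_M^K(y_T) = SafePR_{M,T}, the vector whose s-component is the minimal d such that some strategy is d-safe in s and visits T with positive probability (equivalently, admits at least one compatible run visiting T), with ∞ if no such d exists. -/

import Mathlib

open scoped Classical NNReal ENat

noncomputable section

/-- A consumption Markov decision process. -/
structure CMDP (S A : Type) [Fintype S] where
  Δ : S → A → S → NNReal
  Δ_sum : ∀ s a, (∑ t, Δ s a t) = 1
  C : S → A → ℕ
  R : Set S
  cap : ℕ

namespace CMDP

variable {S A : Type} [Fintype S]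

/-- Strategies map histories (initial state, list of action/state steps) to actions. -/
abbrev Strat (S A : Type) : Type := S × List (A × S) → A

/-- Last state of a history. -/
def lastState (s : S) : List (A × S) → S
  | [] => s
  | (_, t) :: rest => lastState t rest

/-- The `i`-th state (0-indexed) of a history. -/
def stateAt (s : S) (steps : List (A × S)) (i : ℕ) : S :=
  (s :: steps.map Prod.snd).getD i s

variable (M : CMDP S A)

def Succ (s : S) (a : A) : Set S := {t | 0 < M.Δ s a t}

/-- Total consumption along a finite path. -/
def consAux : S → List (A × S) → ℕ
  | _, [] => 0
  | s, (a, t) :: rest => M.C s a + consAux t rest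

/-- One step of the energy-level update. -/
def levelStep (s : S) (a : A) (l : ℕ) : Option ℕ :=
  if s ∈ M.R then (if M.C s a ≤ M.cap then some (M.cap - M.C s a) else none)
  else (if M.C s a ≤ l then some (l - M.C s a) else none)

def energyFrom : Option ℕ → S → List (A × S) → Option ℕ
  | none, _, _ => none
  | some l, _, [] => some l
  | some l, s, (a, t) :: rest => energyFrom (M.levelStep s a l) t rest

/-- Energy level of a history initialized by `d` (`none` = ⊥, exhaustion). -/
def energy (d : ℕ) (s : S) (steps : List (A × S)) : Option ℕ :=
  M.energyFrom (some d) s steps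

/-- Validity of a finite path. -/
def ValidPath : S → List (A × S) → Prop
  | _, [] => True
  | s, (a, t) :: rest => t ∈ M.Succ s a ∧ ValidPath t rest

/-- First state of a run. -/
def runState (ρ : ℕ → S × A) (i : ℕ) : S := (ρ i).1

/-- The finite prefix of a run with `i` steps. -/
def prefixSteps (ρ : ℕ → S × A) (i : ℕ) : List (A × S) :=
  (List.range i).map fun k => ((ρ k).2, (ρ (k + 1)).1)

def IsRun (ρ : ℕ → S × A) : Prop := ∀ i, (ρ (i + 1)).1 ∈ M.Succ (ρ i).1 (ρ i).2

/-- A run is `d`-safe if the energy level of every finite prefix is defined. -/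
def DSafe (d : ℕ) (ρ : ℕ → S × A) : Prop :=
  ∀ i, M.energy d (runState ρ 0) (prefixSteps ρ i) ≠ none

/-- A run is compatible with a strategy. -/
def Compat (σ : Strat S A) (ρ : ℕ → S × A) : Prop :=
  M.IsRun ρ ∧ ∀ i, (ρ i).2 = σ (runState ρ 0, prefixSteps ρ i)

def CompatFrom (σ : Strat S A) (s : S) (ρ : ℕ → S × A) : Prop :=
  M.Compat σ ρ ∧ runState ρ 0 = s

/-- A strategy is `d`-safe in `s` if all compatible runs from `s` are `d`-safe. -/
def SafeStrat (σ : Strat S A) (d : ℕ) (s : S) : Prop :=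
  ∀ ρ, M.CompatFrom σ s ρ → M.DSafe d ρ

/-- A finite history compatible with a strategy. -/
def CompatHist (σ : Strat S A) (s : S) (steps : List (A × S)) : Prop :=
  M.ValidPath s steps ∧
    ∀ (i : ℕ) (h : i < steps.length), (steps.get ⟨i, h⟩).1 = σ (s, steps.take i)

def Memoryless (σ : Strat S A) : Prop :=
  ∀ h₁ h₂ : S × List (A × S), lastState h₁.1 h₁.2 = lastState h₂.1 h₂.2 → σ h₁ = σ h₂

/-- Cost of a run up to the first visit of `T` (∞ if `T` is never visited). -/
def reachCost (T : Set S) (ρ : ℕ → S × A) : ℕ∞ :=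
  ⨅ i ∈ {i : ℕ | runState ρ i ∈ T}, (M.consAux (runState ρ 0) (prefixSteps ρ i) : ℕ∞)

/-- `i`-step bounded reachability cost. -/
def reachCostBdd (T : Set S) (n : ℕ) (ρ : ℕ → S × A) : ℕ∞ :=
  ⨅ i ∈ {i : ℕ | i ≤ n ∧ runState ρ i ∈ T}, (M.consAux (runState ρ 0) (prefixSteps ρ i) : ℕ∞)

/-- Reachability cost requiring at least one step. -/
def reachCostPlus (T : Set S) (ρ : ℕ → S × A) : ℕ∞ :=
  ⨅ i ∈ {i : ℕ | 1 ≤ i ∧ runState ρ i ∈ T}, (M.consAux (runState ρ 0) (prefixSteps ρ i) : ℕ∞)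

def reachCostStrat (T : Set S) (σ : Strat S A) (s : S) : ℕ∞ :=
  ⨆ ρ ∈ {ρ | M.CompatFrom σ s ρ}, M.reachCost T ρ

def minReach (T : Set S) (s : S) : ℕ∞ :=
  ⨅ σ : Strat S A, M.reachCostStrat T σ s

def minReachBdd (T : Set S) (n : ℕ) (s : S) : ℕ∞ :=
  ⨅ σ : Strat S A, ⨆ ρ ∈ {ρ | M.CompatFrom σ s ρ}, M.reachCostBdd T n ρ

def minReachPlus (T : Set S) (s : S) : ℕ∞ :=
  ⨅ σ : Strat S A, ⨆ ρ ∈ {ρ | M.CompatFrom σ s ρ}, M.reachCostPlus T ρ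

/-- The Bellman operator for minimum cost reachability of `T`. -/
def bellman (T : Set S) (v : S → ℕ∞) : S → ℕ∞ := fun s =>
  if s ∈ T then 0 else ⨅ a : A, ((M.C s a : ℕ∞) + ⨆ t ∈ M.Succ s a, v t)

/-- The initial vector: `0` on `T`, `∞` elsewhere. -/
def xTvec (T : Set S) : S → ℕ∞ := fun s => if s ∈ T then 0 else ⊤

/-- Length of the longest simple path of `M`. -/
def longestSimple : ℕ :=
  sSup {n | ∃ (s : S) (steps : List (A × S)),
    M.ValidPath s steps ∧ (s :: steps.map Prod.snd).Nodup ∧ steps.length = n}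

/-- The augmented CMDP `M̃` with a fresh non-reload copy of every state. -/
def augment : CMDP (S ⊕ S) A where
  Δ := fun x a t =>
    Sum.elim (fun u => M.Δ (Sum.elim id id x) a u) (fun _ => (0 : NNReal)) t
  Δ_sum := by
    intro x a
    rw [Fintype.sum_sum_type]
    simp [M.Δ_sum (Sum.elim id id x) a]
  C := fun x a => M.C (Sum.elim id id x) a
  R := Sum.inl '' M.R
  cap := M.cap

/-- Truncation to `0` on reload states. -/
def strunc (x : S → ℕ∞) : S → ℕ∞ := fun s => if s ∈ M.R then 0 else x s

/-- The truncated Bellman-like operator `G`. -/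
def opG (v : S → ℕ∞) : S → ℕ∞ := fun s =>
  ⨅ a : A, ((M.C s a : ℕ∞) + ⨆ t ∈ M.Succ s a, M.strunc v t)

/-- Minimal `d ≤ cap` such that some strategy is `d`-safe in `s` (∞ if none). -/
def safeVec (s : S) : ℕ∞ :=
  ⨅ d ∈ {d : ℕ | d ≤ M.cap ∧ ∃ σ : Strat S A, M.SafeStrat σ d s}, (d : ℕ∞)

/-- An action safe in a state. -/
def SafeAction (s : S) (a : A) : Prop :=
  (s ∉ M.R ∧ ((M.C s a : ℕ∞) + ⨆ t ∈ M.Succ s a, M.safeVec t) ≤ M.safeVec s) ∨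
  (s ∈ M.R ∧ ((M.C s a : ℕ∞) + ⨆ t ∈ M.Succ s a, M.safeVec t) ≤ (M.cap : ℕ∞))

/-- A CMDP is decreasing if every (valid) simple cycle has positive consumption. -/
def Decreasing : Prop :=
  ∀ (s : S) (steps : List (A × S)), M.ValidPath s steps → steps ≠ [] →
    lastState s steps = s → (s :: (steps.map Prod.snd).dropLast).Nodup →
    0 < M.consAux s steps

/-- Selection according to a selection rule: the action of the largest
element of the domain below the counter value. -/
def selectFrom (φ : ℕ → Option A) (m : ℕ) (a₀ : A) : A :=
  (((List.range (m + 1)).reverse).findSome? φ).getD a₀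

/-- The finite counter strategy `Σ^y` induced by a counter selector. -/
def counterStrategy (sel : S → ℕ → Option A) (y : S → ℕ) (a₀ : A) : Strat S A :=
  fun h =>
    match M.energy (y h.1) h.1 h.2 with
    | some m => selectFrom (sel (lastState h.1 h.2)) m a₀
    | none => a₀

/-- The `SPR` value of an action. -/
def spr (s : S) (a : A) (x : S → ℕ∞) : ℕ∞ :=
  (M.C s a : ℕ∞) +
    ⨅ t ∈ M.Succ s a, max (x t) (⨆ t' ∈ {t' ∈ M.Succ s a | t' ≠ t}, M.safeVec t')

def opA (T : Set S) (x : S → ℕ∞) : S → ℕ∞ := fun s =>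
  if s ∈ T then M.safeVec s else ⨅ a : A, M.spr s a x

/-- Two-sided truncation. -/
def trunc2 (x : S → ℕ∞) : S → ℕ∞ := fun s =>
  if (M.cap : ℕ∞) < x s then ⊤ else if s ∈ M.R then 0 else x s

def opB (T : Set S) (x : S → ℕ∞) : S → ℕ∞ := M.trunc2 (M.opA T x)

def yTvec (T : Set S) : S → ℕ∞ := fun s => if s ∈ T then M.safeVec s else ⊤

def VisitsWithin (T : Set S) (i : ℕ) (ρ : ℕ → S × A) : Prop :=
  ∃ j ≤ i, runState ρ j ∈ T

def Visits (T : Set S) (ρ : ℕ → S × A) : Prop := ∃ j, runState ρ j ∈ T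

/-- Minimal `ℓ ≤ cap` s.t. some `ℓ`-safe strategy from `s` has a run visiting `T`
within the first `i` steps. -/
def safePRBdd (T : Set S) (i : ℕ) (s : S) : ℕ∞ :=
  ⨅ ℓ ∈ {ℓ : ℕ | ℓ ≤ M.cap ∧ ∃ σ : Strat S A, M.SafeStrat σ ℓ s ∧
      ∃ ρ, M.CompatFrom σ s ρ ∧ VisitsWithin T i ρ}, (ℓ : ℕ∞)

/-- Minimal `ℓ ≤ cap` s.t. some `ℓ`-safe strategy from `s` has a run visiting `T`. -/
def safePR (T : Set S) (s : S) : ℕ∞ :=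
  ⨅ ℓ ∈ {ℓ : ℕ | ℓ ≤ M.cap ∧ ∃ σ : Strat S A, M.SafeStrat σ ℓ s ∧
      ∃ ρ, M.CompatFrom σ s ρ ∧ Visits T ρ}, (ℓ : ℕ∞)

/-- Replace the set of reload states. -/
def setReload (R' : Set S) : CMDP S A := { M with R := R' }

/-- Probability of a finite continuation of a history under a strategy. -/
def pathProbAux (σ : Strat S A) : S × List (A × S) → List (A × S) → NNReal
  | _, [] => 1
  | h, (a, t) :: rest =>
      (if σ h = a then M.Δ (lastState h.1 h.2) a t else 0) *
        pathProbAux σ (h.1, h.2 ++ [(a, t)]) rest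

/-- Probability that the length-`n` prefix of a run from `s` under `σ`
satisfies the predicate `P`. -/
def probEvent [Fintype A] (σ : Strat S A) (s : S) (n : ℕ) (P : List (A × S) → Prop) : NNReal :=
  ∑ f : Fin n → A × S,
    if P (List.ofFn f) then M.pathProbAux σ (s, []) (List.ofFn f) else 0

/-- Number of visits of `T` along a finite path. -/
def visitCount (T : Set S) (s : S) (steps : List (A × S)) : ℕ :=
  (s :: steps.map Prod.snd).countP (fun x => decide (x ∈ T))

/-- `T` is visited infinitely often with probability one under `σ` from `s`. -/
def buchiAS [Fintype A] (σ : Strat S A) (s : S) (T : Set S) : Prop :=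
  ∀ k : ℕ,
    (⨆ n : ℕ, M.probEvent σ s n (fun steps => k ≤ visitCount T s steps)) = 1

/-- Minimal `d ≤ cap` s.t. some strategy is `d`-safe in `s` and visits `T`
infinitely often almost surely. -/
def safeBuchiVec [Fintype A] (T : Set S) (s : S) : ℕ∞ :=
  ⨅ d ∈ {d : ℕ | d ≤ M.cap ∧ ∃ σ : Strat S A, M.SafeStrat σ d s ∧ M.buchiAS σ s T}, (d : ℕ∞)

/-- Iterated memory update of a memory structure. -/
def updStar {Mem : Type} (upd : Mem → S → A → S → Mem) : Mem → S → List (A × S) → Mem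
  | m, _, [] => m
  | m, s, (a, t) :: rest => updStar upd (upd m s a t) t rest

/-- Finite-memory strategies: encodable by a finite memory structure. -/
def FinMemStrategy (σ : Strat S A) : Prop :=
  ∃ (Mem : Type) (_ : Finite Mem) (init : S → Mem) (upd : Mem → S → A → S → Mem)
    (nxt : Mem → S → A),
    ∀ h : S × List (A × S), σ h = nxt (updStar upd (init h.1) h.1 h.2) (lastState h.1 h.2)

/-- The joint run `α ⊙ ρ`. -/
def jointRun (s : S) (steps : List (A × S)) (ρ : ℕ → S × A) : ℕ → S × A :=
  fun i => if h : i < steps.length then (stateAt s steps i, (steps.get ⟨i, h⟩).1)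
           else ρ (i - steps.length)

end CMDP

/-!
Let `W_i(s)` be the least `ℓ ≤ cap` such that some `ℓ`-safe strategy from `s` has a compatible
history reaching `T` in at most `i` steps. Outside `T`, such a history starts with an action whose
consumption is paid from `ℓ` (or from `cap` at a reload state), moves to a successor from which `T`
is reachable within `i` steps at the remaining level, and must keep every other successor safe at
that level; gluing strategies shows the converse. This is exactly `W_{i+1} = B(W_i)`, and
`W_0 = y_T`, so `B^i(y_T) = W_i`.

A witness history whose state sequence revisits a reload state, or revisits a state with no reload
in between, can be shortened: the strategy that skips the cycle, and afterwards behaves as if the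
cycle had been traversed, is still `ℓ`-safe, since the cycle cannot have gained energy. A state
sequence without such repetitions lists each reload state at most once and, between consecutive
reloads, pairwise distinct non-reload states, so it has at most
`(|S| - |R|) + (|S| - |R| + 1)·|R| ≤ K + 1` entries. Hence `W_K = SafePR`.
-/

theorem ENat.iInf_le_natCast_iff {ι : Sort*} {f : ι → ℕ∞} {n : ℕ} :
    ⨅ i, f i ≤ n ↔ ∃ i, f i ≤ n := by
  refine ⟨fun h => ?_, fun ⟨i, hi⟩ => (iInf_le f i).trans hi⟩
  have hn : (n : ℕ∞) ≠ ⊤ := ENat.natCast_ne_top n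
  obtain ⟨i, hi⟩ := iInf_lt_iff.1 (h.trans_lt ((ENat.lt_add_one_iff hn).2 le_rfl))
  exact ⟨i, (ENat.lt_add_one_iff hn).1 hi⟩

theorem ENat.natCast_add_le_natCast_iff {c n : ℕ} {x : ℕ∞} :
    (c : ℕ∞) + x ≤ n ↔ ∃ m : ℕ, c + m = n ∧ x ≤ m := by
  induction x using ENat.recTopCoe with
  | top => simp
  | coe k =>
    norm_cast
    exact ⟨fun h => ⟨n - c, by omega, by omega⟩, fun ⟨m, hm, hkm⟩ => by omega⟩

theorem ENat.eq_of_forall_le_natCast_iff {c : ℕ} {u v : ℕ∞} (hu : u ≤ c ∨ u = ⊤)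
    (hv : v ≤ c ∨ v = ⊤) (h : ∀ m ≤ c, u ≤ m ↔ v ≤ m) : u = v := by
  have key : ∀ {u v : ℕ∞}, (v ≤ c ∨ v = ⊤) → (∀ m ≤ c, v ≤ m → u ≤ m) → u ≤ v := by
    rintro u v (hv | rfl) h
    · lift v to ℕ using (hv.trans_lt (ENat.natCast_lt_top c)).ne
      exact h v (by exact_mod_cast hv) le_rfl
    · exact le_top
  exact le_antisymm (key hv fun m hm => (h m hm).2) (key hu fun m hm => (h m hm).1)

section CappedInf

variable {c : ℕ} {P : ℕ → Prop}

theorem biInf_natCast_le_or_eq_top :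
    (⨅ ℓ ∈ {ℓ : ℕ | ℓ ≤ c ∧ P ℓ}, (ℓ : ℕ∞)) ≤ c ∨
      (⨅ ℓ ∈ {ℓ : ℕ | ℓ ≤ c ∧ P ℓ}, (ℓ : ℕ∞)) = ⊤ := by
  by_cases h : ∃ ℓ, ℓ ≤ c ∧ P ℓ
  · obtain ⟨ℓ, hℓ⟩ := h
    exact Or.inl ((biInf_le (fun ℓ : ℕ => (ℓ : ℕ∞)) hℓ).trans (Nat.cast_le.2 hℓ.1))
  · push Not at h
    exact Or.inr (by simpa using h)

theorem biInf_natCast_le_iff (hP : Monotone P) {m : ℕ} (hm : m ≤ c) :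
    (⨅ ℓ ∈ {ℓ : ℕ | ℓ ≤ c ∧ P ℓ}, (ℓ : ℕ∞)) ≤ m ↔ P m := by
  refine ⟨fun h => ?_, fun h => biInf_le _ ⟨hm, h⟩⟩
  obtain ⟨ℓ, h'⟩ := ENat.iInf_le_natCast_iff.1 h
  obtain ⟨hℓ, hle⟩ := ENat.iInf_le_natCast_iff.1 h'
  exact hP (show ℓ ≤ m by exact_mod_cast hle) hℓ.2

end CappedInf

theorem List.exists_eq_append_cons_append_cons_of_sublist {α : Type*} {x : α} {l : List α}
    (h : List.Sublist [x, x] l) : ∃ P mid Q, l = P ++ x :: (mid ++ x :: Q) := by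
  obtain ⟨r₁, r₂, rfl, h₁, h₂⟩ := List.cons_sublist_iff.1 h
  obtain ⟨P, m₁, rfl⟩ := List.append_of_mem h₁
  obtain ⟨m₂, Q, rfl⟩ := List.append_of_mem (h₂.subset (List.mem_singleton_self x))
  exact ⟨P, m₁ ++ m₂, Q, by simp⟩

theorem List.forall_not_or_exists_first {α : Type*} (p : α → Prop) :
    ∀ l : List α, (∀ z ∈ l, ¬ p z) ∨ ∃ P x Q, l = P ++ x :: Q ∧ (∀ z ∈ P, ¬ p z) ∧ p x
  | [] => Or.inl (by simp)
  | z :: l => by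
    by_cases hz : p z
    · exact Or.inr ⟨[], z, l, rfl, by simp, hz⟩
    · rcases forall_not_or_exists_first p l with h | ⟨P, x, Q, rfl, hP, hx⟩
      · exact Or.inl (by simpa [hz] using h)
      · exact Or.inr ⟨z :: P, x, Q, rfl, by simpa [hz] using hP, hx⟩

theorem List.Nodup.length_le_ncard {α : Type*} [Finite α] {l : List α} {U : Set α}
    (hl : l.Nodup) (hU : ∀ z ∈ l, z ∈ U) : l.length ≤ U.ncard := by
  rw [← List.toFinset_card_of_nodup hl, ← Set.ncard_coe_finset]
  exact Set.ncard_le_ncard fun z hz => hU z (by simpa using hz)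

section RemovableCycle

variable {α : Type*} (R : Set α)

def HasRemovableCycle (Z : List α) : Prop :=
  ∃ P mid Q x, Z = P ++ x :: (mid ++ x :: Q) ∧ (x ∈ R ∨ ∀ z ∈ x :: mid, z ∉ R)

variable {R}

theorem nodup_of_not_hasRemovableCycle {P W : List α} (h : ¬ HasRemovableCycle R (P ++ W))
    (hP : ∀ z ∈ P, z ∉ R) : P.Nodup := by
  refine List.nodup_iff_sublist.2 fun x hx => h ?_
  obtain ⟨P₁, mid, Q, rfl⟩ := List.exists_eq_append_cons_append_cons_of_sublist hx
  exact ⟨P₁, mid, Q ++ W, x, by simp, Or.inr fun z hz => hP z (by aesop)⟩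

theorem nodup_filter_of_not_hasRemovableCycle {Z : List α} (h : ¬ HasRemovableCycle R Z) :
    (Z.filter (· ∈ R)).Nodup := by
  refine List.nodup_iff_sublist.2 fun x hx => h ?_
  obtain ⟨P, mid, Q, rfl⟩ :=
    List.exists_eq_append_cons_append_cons_of_sublist (hx.trans List.filter_sublist)
  have hx : x ∈ R := by simpa using List.of_mem_filter (hx.subset (List.mem_cons_self ..))
  exact ⟨P, mid, Q, x, rfl, Or.inl hx⟩

variable [Fintype α]

theorem length_le_of_not_hasRemovableCycle (n : ℕ) :
    ∀ Z : List α, (Z.filter (· ∈ R)).length = n → ¬ HasRemovableCycle R Z →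
      Z.length ≤ (Fintype.card α - R.ncard) + (Fintype.card α - R.ncard + 1) * n := by
  have hblock : ∀ P : List α, P.Nodup → (∀ z ∈ P, z ∉ R) → P.length ≤ Fintype.card α - R.ncard :=
    fun P hP hR => by
      have := hP.length_le_ncard (U := Rᶜ) hR
      rwa [Set.ncard_compl, Nat.card_eq_fintype_card] at this
  induction n with
  | zero =>
    intro Z hn h
    have hR : ∀ z ∈ Z, z ∉ R := by simpa [List.filter_eq_nil_iff] using hn
    have := hblock Z (nodup_of_not_hasRemovableCycle (W := []) (by simpa using h) hR) hR
    omega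
  | succ n ih =>
    intro Z hn h
    rcases List.forall_not_or_exists_first (· ∈ R) Z with hR | ⟨P, x, Q, rfl, hP, hx⟩
    · have : Z.filter (· ∈ R) = [] := List.filter_eq_nil_iff.2 (by simpa using hR)
      simp [this] at hn
    · have hQ : ¬ HasRemovableCycle R Q := fun ⟨P', mid, Q', y, hQ, hy⟩ =>
        h ⟨P ++ x :: P', mid, Q', y, by simp [hQ], hy⟩
      have hQn : (Q.filter (· ∈ R)).length = n := by
        have : P.filter (· ∈ R) = [] := List.filter_eq_nil_iff.2 (by simpa using hP)
        simpa [this, hx] using hn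
      have hPlen := hblock P (nodup_of_not_hasRemovableCycle h hP) hP
      have hQlen := ih Q hQn hQ
      simp only [List.length_append, List.length_cons, Nat.mul_succ]
      omega

theorem hasRemovableCycle_of_length_lt {Z : List α}
    (h : (Fintype.card α - R.ncard) + (Fintype.card α - R.ncard + 1) * R.ncard < Z.length) :
    HasRemovableCycle R Z := by
  by_contra hZ
  have hn : (Z.filter (· ∈ R)).length ≤ R.ncard :=
    (nodup_filter_of_not_hasRemovableCycle hZ).length_le_ncard fun z hz => by
      simpa using (List.mem_filter.1 hz).2
  have := length_le_of_not_hasRemovableCycle _ Z rfl hZ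
  have := Nat.mul_le_mul_left (Fintype.card α - R.ncard + 1) hn
  omega

end RemovableCycle

namespace CMDP

section Histories

variable {S A : Type}

theorem lastState_append (s : S) (B C : List (A × S)) :
    lastState s (B ++ C) = lastState (lastState s B) C := by
  induction B generalizing s with
  | nil => rfl
  | cons p B ih => exact ih p.2

theorem prefixSteps_length (ρ : ℕ → S × A) (n : ℕ) : (prefixSteps ρ n).length = n := by
  simp [prefixSteps]

theorem prefixSteps_succ (ρ : ℕ → S × A) (n : ℕ) :
    prefixSteps ρ (n + 1) = prefixSteps ρ n ++ [((ρ n).2, (ρ (n + 1)).1)] := by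
  simp [prefixSteps, List.range_succ]

theorem exists_split_of_states_eq {s x : S} {L : List (A × S)} {P W : List S}
    (h : s :: L.map Prod.snd = P ++ x :: W) :
    ∃ L₁ L₂, L = L₁ ++ L₂ ∧ s :: L₁.map Prod.snd = P ++ [x] ∧ lastState s L₁ = x ∧
      L₂.map Prod.snd = W := by
  induction P generalizing s L with
  | nil =>
    obtain ⟨rfl, hL⟩ := List.cons_eq_cons.1 h
    exact ⟨[], L, rfl, rfl, rfl, hL⟩
  | cons p P ih =>
    obtain ⟨rfl, hL⟩ := List.cons_eq_cons.1 h
    obtain ⟨⟨a, t⟩, L, rfl⟩ : ∃ q L', L = q :: L' := by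
      cases L with
      | nil => cases P <;> simp at hL
      | cons q L' => exact ⟨q, L', rfl⟩
    obtain ⟨L₁, L₂, rfl, h₁, hlast, h₂⟩ := ih hL
    exact ⟨(a, t) :: L₁, L₂, rfl, by simp [h₁], hlast, h₂⟩

def shiftStrat (σ : Strat S A) (s : S) (B : List (A × S)) : Strat S A :=
  fun h => σ (s, B ++ h.2)

def consStrat (a : A) (τ : S → Strat S A) : Strat S A
  | (_, []) => a
  | (_, (_, u) :: rest) => τ u (u, rest)

/-- `σ`, played from `s` as if the cycle `A₂` had been traversed right after `A₁`. -/
def skipCycle (σ : Strat S A) (s : S) (A₁ A₂ : List (A × S)) : Strat S A :=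
  fun h => σ (s, if A₁ <+: h.2 then A₁ ++ A₂ ++ h.2.drop A₁.length else h.2)

theorem skipCycle_append (σ : Strat S A) (s t : S) (A₁ A₂ v : List (A × S)) :
    skipCycle σ s A₁ A₂ (t, A₁ ++ v) = σ (s, A₁ ++ A₂ ++ v) := by
  simp [skipCycle]

theorem skipCycle_of_not_prefix (σ : Strat S A) (s t : S) {A₁ A₂ u : List (A × S)}
    (h : ¬ A₁ <+: u) : skipCycle σ s A₁ A₂ (t, u) = σ (s, u) := by
  simp [skipCycle, h]

end Histories

variable {S A : Type} [Fintype S] (M : CMDP S A)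

theorem exists_mem_succ (s : S) (a : A) : ∃ t, t ∈ M.Succ s a := by
  by_contra! h
  have : ∑ t, M.Δ s a t = 0 := Finset.sum_eq_zero fun t _ => by simpa [Succ] using h t
  simp [M.Δ_sum] at this

def someSucc (s : S) (a : A) : S := (M.exists_mem_succ s a).choose

theorem someSucc_mem (s : S) (a : A) : M.someSucc s a ∈ M.Succ s a :=
  (M.exists_mem_succ s a).choose_spec

section Energy

def refill (s : S) (ℓ : ℕ) : ℕ := if s ∈ M.R then M.cap else ℓ

theorem refill_le_cap {s : S} {ℓ : ℕ} (hℓ : ℓ ≤ M.cap) : M.refill s ℓ ≤ M.cap := by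
  unfold refill; split_ifs <;> omega

theorem levelStep_eq (s : S) (a : A) (ℓ : ℕ) :
    M.levelStep s a ℓ =
      if M.C s a ≤ M.refill s ℓ then some (M.refill s ℓ - M.C s a) else none := by
  unfold levelStep refill; split_ifs <;> rfl

theorem levelStep_eq_some_iff {s : S} {a : A} {ℓ m : ℕ} :
    M.levelStep s a ℓ = some m ↔ M.C s a + m = M.refill s ℓ := by
  rw [levelStep_eq]; split_ifs <;> simp <;> omega

theorem energyFrom_none (s : S) (L : List (A × S)) : M.energyFrom none s L = none := by
  cases L <;> rfl

theorem energyFrom_append (e : Option ℕ) (s : S) (B C : List (A × S)) :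
    M.energyFrom e s (B ++ C) = M.energyFrom (M.energyFrom e s B) (lastState s B) C := by
  induction B generalizing e s with
  | nil => cases e <;> simp [energyFrom, energyFrom_none, lastState]
  | cons p B ih => cases e <;> simp [energyFrom, energyFrom_none, lastState, ih]

theorem energyFrom_ne_none_of_le {d d' : ℕ} (hd : d ≤ d') {s : S} {B : List (A × S)}
    (h : M.energyFrom (some d) s B ≠ none) : M.energyFrom (some d') s B ≠ none := by
  induction B generalizing d d' s with
  | nil => simp [energyFrom]
  | cons p B ih =>
    obtain ⟨a, t⟩ := p
    simp only [energyFrom, levelStep_eq] at h ⊢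
    have hr : M.refill s d ≤ M.refill s d' := by unfold refill; split_ifs <;> omega
    split_ifs at h with hC
    · rw [if_pos (hC.trans hr)]
      exact ih (by omega) h
    · exact absurd (M.energyFrom_none t B) h

theorem energyFrom_ne_none_of_mem_R {x : S} (hx : x ∈ M.R) (d d' : ℕ) {B : List (A × S)}
    (h : M.energyFrom (some d) x B ≠ none) : M.energyFrom (some d') x B ≠ none := by
  cases B with
  | nil => simp [energyFrom]
  | cons p B => simpa [energyFrom, levelStep_eq, refill, hx] using h

theorem le_of_energyFrom_eq_some {x : S} {B : List (A × S)}
    (hB : ∀ y ∈ x :: B.map Prod.snd, y ∉ M.R) {d m : ℕ}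
    (h : M.energyFrom (some d) x B = some m) : m ≤ d := by
  induction B generalizing x d with
  | nil => simp_all [energyFrom]
  | cons p B ih =>
    obtain ⟨a, t⟩ := p
    simp only [List.map_cons, List.forall_mem_cons] at hB
    simp only [energyFrom, levelStep_eq, refill, if_neg hB.1] at h
    split_ifs at h
    · exact (ih (List.forall_mem_cons.2 hB.2) h).trans (Nat.sub_le _ _)
    · exact absurd h (by simp [energyFrom_none])

/-- The cycle cannot gain energy: at a reload state the incoming level is irrelevant, and
without reloads the level only decreases. -/
theorem energyFrom_ne_none_of_cycle {x : S} {C v : List (A × S)} (hC : lastState x C = x)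
    (hx : x ∈ M.R ∨ ∀ y ∈ x :: C.map Prod.snd, y ∉ M.R) {d : ℕ}
    (h : M.energyFrom (some d) x (C ++ v) ≠ none) : M.energyFrom (some d) x v ≠ none := by
  rw [energyFrom_append, hC] at h
  obtain ⟨m, hm⟩ : ∃ m, M.energyFrom (some d) x C = some m := by
    cases he : M.energyFrom (some d) x C with
    | none => simp [he, energyFrom_none] at h
    | some m => exact ⟨m, rfl⟩
  rw [hm] at h
  rcases hx with hx | hx
  · exact M.energyFrom_ne_none_of_mem_R hx m d h
  · exact M.energyFrom_ne_none_of_le (M.le_of_energyFrom_eq_some hx hm) h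

end Energy

section Compatibility

variable {σ σ' : Strat S A} {s : S}

theorem compatHist_nil (σ : Strat S A) (s : S) : M.CompatHist σ s [] :=
  ⟨trivial, fun _ h => absurd h (Nat.not_lt_zero _)⟩

theorem compatHist_congr {L : List (A × S)}
    (h : ∀ i < L.length, σ (s, L.take i) = σ' (s, L.take i)) :
    M.CompatHist σ s L ↔ M.CompatHist σ' s L :=
  ⟨fun ⟨hv, ha⟩ => ⟨hv, fun i hi => (ha i hi).trans (h i hi)⟩,
    fun ⟨hv, ha⟩ => ⟨hv, fun i hi => (ha i hi).trans (h i hi).symm⟩⟩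

theorem compatHist_cons {a : A} {t : S} {C : List (A × S)} :
    M.CompatHist σ s ((a, t) :: C) ↔
      σ (s, []) = a ∧ t ∈ M.Succ s a ∧ M.CompatHist (shiftStrat σ s [(a, t)]) t C := by
  unfold CompatHist
  constructor
  · rintro ⟨⟨hmem, hvp⟩, hact⟩
    refine ⟨(hact 0 (by simp)).symm, hmem, hvp, fun i hi => ?_⟩
    simpa [shiftStrat] using hact (i + 1) (by simpa using hi)
  · rintro ⟨ha, hmem, hvp, hact⟩
    refine ⟨⟨hmem, hvp⟩, fun i hi => ?_⟩
    cases i with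
    | zero => simpa using ha.symm
    | succ i => simpa [shiftStrat] using hact i (by simpa using hi)

theorem compatHist_append {B C : List (A × S)} :
    M.CompatHist σ s (B ++ C) ↔
      M.CompatHist σ s B ∧ M.CompatHist (shiftStrat σ s B) (lastState s B) C := by
  induction B generalizing σ s with
  | nil => exact ⟨fun h => ⟨M.compatHist_nil σ s, h⟩, fun h => h.2⟩
  | cons p B ih =>
    obtain ⟨a, t⟩ := p
    rw [List.cons_append, M.compatHist_cons, ih, M.compatHist_cons]
    exact ⟨fun ⟨ha, ht, hB, hC⟩ => ⟨⟨ha, ht, hB⟩, hC⟩, fun ⟨⟨ha, ht, hB⟩, hC⟩ => ⟨ha, ht, hB, hC⟩⟩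

theorem compatHist_snoc {B : List (A × S)} {a : A} {t : S} :
    M.CompatHist σ s (B ++ [(a, t)]) ↔
      M.CompatHist σ s B ∧ σ (s, B) = a ∧ t ∈ M.Succ (lastState s B) a := by
  simp [compatHist_append, compatHist_cons, compatHist_nil, shiftStrat]

theorem compatHist_take {L : List (A × S)} (h : M.CompatHist σ s L) (n : ℕ) :
    M.CompatHist σ s (L.take n) :=
  ((M.compatHist_append).1 (by rwa [List.take_append_drop])).1

theorem compatHist_consStrat_cons {a b : A} {τ : S → Strat S A} {u : S} {L : List (A × S)} :
    M.CompatHist (consStrat a τ) s ((b, u) :: L) ↔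
      a = b ∧ u ∈ M.Succ s b ∧ M.CompatHist (τ u) u L := by
  rw [compatHist_cons, M.compatHist_congr (σ' := τ u) fun _ _ => rfl]
  rfl

theorem compatHist_skipCycle_of_not_prefix {A₁ A₂ u : List (A × S)} (hu : ¬ A₁ <+: u) :
    M.CompatHist (skipCycle σ s A₁ A₂) s u ↔ M.CompatHist σ s u :=
  M.compatHist_congr fun i _ =>
    skipCycle_of_not_prefix σ s s fun h => hu (h.trans (List.take_prefix i u))

theorem compatHist_skipCycle_append_iff {A₁ A₂ v : List (A × S)}
    (h12 : M.CompatHist σ s (A₁ ++ A₂)) (hloop : lastState s (A₁ ++ A₂) = lastState s A₁) :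
    M.CompatHist (skipCycle σ s A₁ A₂) s (A₁ ++ v) ↔ M.CompatHist σ s (A₁ ++ A₂ ++ v) := by
  have hshift : shiftStrat (skipCycle σ s A₁ A₂) s A₁ = shiftStrat σ s (A₁ ++ A₂) :=
    funext fun h => skipCycle_append σ s s A₁ A₂ h.2
  have h1 : M.CompatHist (skipCycle σ s A₁ A₂) s A₁ :=
    (M.compatHist_congr fun i hi => skipCycle_of_not_prefix σ s s fun hp =>
      (hp.length_le.trans_lt (by simpa using hi)).false).2 ((M.compatHist_append).1 h12).1
  rw [compatHist_append, compatHist_append (B := A₁ ++ A₂), hshift, hloop]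
  exact ⟨fun h => ⟨h12, h.2⟩, fun h => ⟨h1, h.2⟩⟩

end Compatibility

def SafeHist (σ : Strat S A) (d : ℕ) (s : S) : Prop :=
  ∀ L, M.CompatHist σ s L → M.energy d s L ≠ none

section Runs

variable {σ : Strat S A} {s : S}

theorem compatHist_prefixSteps {ρ : ℕ → S × A} (h : M.CompatFrom σ s ρ) (n : ℕ) :
    M.CompatHist σ s (prefixSteps ρ n) ∧ lastState s (prefixSteps ρ n) = runState ρ n := by
  induction n with
  | zero => exact ⟨M.compatHist_nil σ s, h.2.symm⟩
  | succ n ih =>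
    rw [prefixSteps_succ, compatHist_snoc, lastState_append, ih.2]
    refine ⟨⟨ih.1, ?_, h.1.1 n⟩, rfl⟩
    rw [← h.2]
    exact (h.1.2 n).symm

def extendHist (σ : Strat S A) (s : S) (L : List (A × S)) : ℕ → List (A × S)
  | 0 => []
  | n + 1 =>
    let H := extendHist σ s L n
    H ++ [(σ (s, H), if h : n < L.length then L[n].2
      else M.someSucc (lastState s H) (σ (s, H)))]

theorem extendHist_of_le {L : List (A × S)} (hL : M.CompatHist σ s L) {n : ℕ}
    (hn : n ≤ L.length) : M.extendHist σ s L n = L.take n := by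
  induction n with
  | zero => rfl
  | succ n ih =>
    have hlt : n < L.length := by omega
    have hact : L[n].1 = σ (s, L.take n) := hL.2 n hlt
    rw [extendHist, dif_pos hlt, ih hlt.le, List.take_add_one, List.getElem?_eq_getElem hlt,
      ← hact]
    rfl

theorem extendHist_succ {L : List (A × S)} (hL : M.CompatHist σ s L) (n : ℕ) :
    ∃ t ∈ M.Succ (lastState s (M.extendHist σ s L n)) (σ (s, M.extendHist σ s L n)),
      M.extendHist σ s L (n + 1) =
        M.extendHist σ s L n ++ [(σ (s, M.extendHist σ s L n), t)] := by
  refine ⟨_, ?_, rfl⟩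
  split_ifs with hn
  · have h' := M.compatHist_take hL (n + 1)
    rw [List.take_add_one, List.getElem?_eq_getElem hn] at h'
    obtain ⟨-, hact, hmem⟩ := (M.compatHist_snoc (a := L[n].1) (t := L[n].2)).1 h'
    rw [M.extendHist_of_le hL hn.le, hact]
    exact hmem
  · exact M.someSucc_mem _ _

theorem exists_compatFrom_prefixSteps_eq {L : List (A × S)} (hL : M.CompatHist σ s L) :
    ∃ ρ, M.CompatFrom σ s ρ ∧ prefixSteps ρ L.length = L := by
  let ρ : ℕ → S × A := fun n => (lastState s (M.extendHist σ s L n), σ (s, M.extendHist σ s L n))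
  have hpre : ∀ n, prefixSteps ρ n = M.extendHist σ s L n := by
    intro n
    induction n with
    | zero => rfl
    | succ n ih => rw [prefixSteps_succ, ih]; simp [ρ, extendHist, lastState_append, lastState]
  refine ⟨ρ, ⟨⟨fun n => ?_, fun n => ?_⟩, rfl⟩,
    (hpre _).trans ((M.extendHist_of_le hL le_rfl).trans (List.take_length ..))⟩
  · obtain ⟨t, ht, hH⟩ := M.extendHist_succ hL n
    simpa [ρ, hH, lastState_append, lastState] using ht
  · show σ (s, M.extendHist σ s L n) = σ (s, prefixSteps ρ n)
    rw [hpre]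

theorem safeStrat_iff_safeHist {d : ℕ} : M.SafeStrat σ d s ↔ M.SafeHist σ d s := by
  constructor
  · intro h L hL
    obtain ⟨ρ, hρ, hpre⟩ := M.exists_compatFrom_prefixSteps_eq hL
    simpa [hρ.2, hpre] using h ρ hρ L.length
  · intro h ρ hρ i
    rw [hρ.2]
    exact h _ (M.compatHist_prefixSteps hρ i).1

theorem exists_compatFrom_visitsWithin_iff {T : Set S} {i : ℕ} :
    (∃ ρ, M.CompatFrom σ s ρ ∧ VisitsWithin T i ρ) ↔
      ∃ L, M.CompatHist σ s L ∧ L.length ≤ i ∧ lastState s L ∈ T := by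
  constructor
  · rintro ⟨ρ, hρ, j, hj, hjT⟩
    obtain ⟨hL, hlast⟩ := M.compatHist_prefixSteps hρ j
    exact ⟨prefixSteps ρ j, hL, (prefixSteps_length ρ j).trans_le hj, hlast ▸ hjT⟩
  · rintro ⟨L, hL, hlen, hlast⟩
    obtain ⟨ρ, hρ, hpre⟩ := M.exists_compatFrom_prefixSteps_eq hL
    refine ⟨ρ, hρ, L.length, hlen, ?_⟩
    rw [← (M.compatHist_prefixSteps hρ L.length).2, hpre]
    exact hlast

end Runs

section Safety

variable {σ : Strat S A} {s : S}

theorem safeHist_mono (σ : Strat S A) (s : S) : Monotone fun d => M.SafeHist σ d s :=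
  fun _ _ hd h L hL => M.energyFrom_ne_none_of_le hd (h L hL)

theorem safeHist_iff_of_mem_R (hs : s ∈ M.R) (d d' : ℕ) :
    M.SafeHist σ d s ↔ M.SafeHist σ d' s :=
  ⟨fun h L hL => M.energyFrom_ne_none_of_mem_R hs d d' (h L hL),
    fun h L hL => M.energyFrom_ne_none_of_mem_R hs d' d (h L hL)⟩

theorem exists_levelStep_eq_some {ℓ : ℕ} (h : M.SafeHist σ ℓ s) :
    ∃ m, M.levelStep s (σ (s, [])) ℓ = some m := by
  have hL := (M.compatHist_cons (C := [])).2
    ⟨rfl, M.someSucc_mem s (σ (s, [])), M.compatHist_nil _ _⟩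
  have := h _ hL
  cases hm : M.levelStep s (σ (s, [])) ℓ with
  | none => simp [energy, energyFrom, hm] at this
  | some m => exact ⟨m, rfl⟩

theorem safeHist_shiftStrat {ℓ m : ℕ} (h : M.SafeHist σ ℓ s) {t : S}
    (ht : t ∈ M.Succ s (σ (s, []))) (hm : M.levelStep s (σ (s, [])) ℓ = some m) :
    M.SafeHist (shiftStrat σ s [(σ (s, []), t)]) m t := fun L hL => by
  simpa [energy, energyFrom, hm] using h _ ((M.compatHist_cons).2 ⟨rfl, ht, hL⟩)

theorem safeHist_consStrat {a : A} {τ : S → Strat S A} {ℓ m : ℕ}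
    (hm : M.levelStep s a ℓ = some m) (hτ : ∀ u ∈ M.Succ s a, M.SafeHist (τ u) m u) :
    M.SafeHist (consStrat a τ) ℓ s := by
  rintro (_ | ⟨⟨b, u⟩, L⟩) hL
  · simp [energy, energyFrom]
  · obtain ⟨rfl, hu, hL⟩ := (M.compatHist_consStrat_cons).1 hL
    simpa [energy, energyFrom, hm] using hτ u hu L hL

theorem safeHist_skipCycle {ℓ : ℕ} {A₁ A₂ : List (A × S)} (hσ : M.SafeHist σ ℓ s)
    (h12 : M.CompatHist σ s (A₁ ++ A₂)) (hloop : lastState s (A₁ ++ A₂) = lastState s A₁)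
    (hx : lastState s A₁ ∈ M.R ∨ ∀ y ∈ lastState s A₁ :: A₂.map Prod.snd, y ∉ M.R) :
    M.SafeHist (skipCycle σ s A₁ A₂) ℓ s := by
  intro u hu
  by_cases hp : A₁ <+: u
  · obtain ⟨v, rfl⟩ := hp
    have h := hσ _ ((M.compatHist_skipCycle_append_iff h12 hloop).1 hu)
    rw [lastState_append] at hloop
    unfold energy at h ⊢
    rw [List.append_assoc, energyFrom_append] at h
    rw [energyFrom_append]
    cases he : M.energyFrom (some ℓ) s A₁ with
    | none => simp [he, energyFrom_none] at h
    | some m => rw [he] at h; exact M.energyFrom_ne_none_of_cycle hloop hx h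
  · exact hσ u ((M.compatHist_skipCycle_of_not_prefix hp).1 hu)

theorem safeVec_eq_biInf (s : S) :
    M.safeVec s = ⨅ ℓ ∈ {ℓ : ℕ | ℓ ≤ M.cap ∧ ∃ σ, M.SafeHist σ ℓ s}, (ℓ : ℕ∞) := by
  simp only [safeVec, safeStrat_iff_safeHist]

theorem safeVec_le_iff {m : ℕ} (hm : m ≤ M.cap) : M.safeVec s ≤ m ↔ ∃ σ, M.SafeHist σ m s := by
  rw [safeVec_eq_biInf]
  exact biInf_natCast_le_iff (fun _ _ hd ⟨σ, h⟩ => ⟨σ, M.safeHist_mono σ s hd h⟩) hm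

theorem safeVec_le_refill_iff {ℓ : ℕ} (hℓ : ℓ ≤ M.cap) :
    M.safeVec s ≤ M.refill s ℓ ↔ ∃ σ, M.SafeHist σ ℓ s := by
  unfold refill
  split_ifs with hs
  · rw [safeVec_le_iff M le_rfl]
    exact exists_congr fun σ => M.safeHist_iff_of_mem_R hs _ _
  · exact M.safeVec_le_iff hℓ

end Safety

theorem trunc2_le_iff {x : S → ℕ∞} {s : S} {m : ℕ} (hm : m ≤ M.cap) :
    M.trunc2 x s ≤ m ↔ x s ≤ M.refill s m := by
  have hm' : (m : ℕ∞) ≤ M.cap := by exact_mod_cast hm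
  unfold trunc2 refill
  split_ifs with h₁ h₂ h₂
  · exact iff_of_false (by simp) (not_le.2 h₁)
  · exact iff_of_false (by simp) fun h => (h₁.trans_le (h.trans hm')).false
  · exact iff_of_true zero_le (not_lt.1 h₁)
  · rfl

theorem trunc2_le_cap_or_eq_top (x : S → ℕ∞) (s : S) :
    M.trunc2 x s ≤ M.cap ∨ M.trunc2 x s = ⊤ := by
  unfold trunc2
  split_ifs with h₁
  · exact Or.inr rfl
  · exact Or.inl zero_le
  · exact Or.inl (not_lt.1 h₁)

theorem spr_le_iff {s : S} {a : A} {x : S → ℕ∞} {n : ℕ} :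
    M.spr s a x ≤ n ↔ ∃ m, M.C s a + m = n ∧ ∃ t ∈ M.Succ s a,
      x t ≤ m ∧ ∀ t' ∈ M.Succ s a, t' ≠ t → M.safeVec t' ≤ m := by
  simp only [spr, ENat.natCast_add_le_natCast_iff, ENat.iInf_le_natCast_iff, max_le_iff,
    iSup₂_le_iff, Set.mem_ofPred_eq, and_imp, exists_prop]

def SafeReachWithin (T : Set S) (i : ℕ) (s : S) (ℓ : ℕ) : Prop :=
  ∃ σ L, M.SafeHist σ ℓ s ∧ M.CompatHist σ s L ∧ L.length ≤ i ∧ lastState s L ∈ T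

section Reachability

variable {T : Set S} {s : S}

theorem safeReachWithin_mono (T : Set S) (i : ℕ) (s : S) :
    Monotone (M.SafeReachWithin T i s) :=
  fun _ _ hd ⟨σ, L, hσ, h⟩ => ⟨σ, L, M.safeHist_mono σ s hd hσ, h⟩

theorem safePRBdd_eq_biInf (T : Set S) (i : ℕ) (s : S) :
    M.safePRBdd T i s = ⨅ ℓ ∈ {ℓ : ℕ | ℓ ≤ M.cap ∧ M.SafeReachWithin T i s ℓ}, (ℓ : ℕ∞) := by
  simp only [safePRBdd, SafeReachWithin, safeStrat_iff_safeHist,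
    exists_compatFrom_visitsWithin_iff, exists_and_left]

theorem safePR_eq_biInf (T : Set S) (s : S) :
    M.safePR T s =
      ⨅ ℓ ∈ {ℓ : ℕ | ℓ ≤ M.cap ∧ ∃ i, M.SafeReachWithin T i s ℓ}, (ℓ : ℕ∞) := by
  have hvisits : ∀ σ, (∃ ρ, M.CompatFrom σ s ρ ∧ Visits T ρ) ↔
      ∃ i, ∃ ρ, M.CompatFrom σ s ρ ∧ VisitsWithin T i ρ :=
    fun σ => ⟨fun ⟨ρ, hρ, j, hj⟩ => ⟨j, ρ, hρ, j, le_rfl, hj⟩,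
      fun ⟨_, ρ, hρ, j, _, hj⟩ => ⟨ρ, hρ, j, hj⟩⟩
  simp only [safePR, SafeReachWithin, hvisits, safeStrat_iff_safeHist,
    exists_compatFrom_visitsWithin_iff, exists_and_left, @exists_comm ℕ (Strat S A)]

theorem safePRBdd_le_iff {i m : ℕ} (hm : m ≤ M.cap) :
    M.safePRBdd T i s ≤ m ↔ M.SafeReachWithin T i s m := by
  rw [safePRBdd_eq_biInf]
  exact biInf_natCast_le_iff (M.safeReachWithin_mono T i s) hm

theorem safeReachWithin_of_mem (hs : s ∈ T) {i ℓ : ℕ} :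
    M.SafeReachWithin T i s ℓ ↔ ∃ σ, M.SafeHist σ ℓ s :=
  ⟨fun ⟨σ, _, hσ, _⟩ => ⟨σ, hσ⟩,
    fun ⟨σ, hσ⟩ => ⟨σ, [], hσ, M.compatHist_nil σ s, Nat.zero_le _, hs⟩⟩

theorem not_safeReachWithin_zero (hs : s ∉ T) {ℓ : ℕ} : ¬ M.SafeReachWithin T 0 s ℓ := by
  rintro ⟨σ, L, -, -, hlen, hlast⟩
  rw [List.length_eq_zero_iff.1 (Nat.le_zero.1 hlen)] at hlast
  exact hs hlast

theorem safeReachWithin_succ_iff (hs : s ∉ T) {i ℓ : ℕ} :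
    M.SafeReachWithin T (i + 1) s ℓ ↔ ∃ a m, M.levelStep s a ℓ = some m ∧
      ∃ t ∈ M.Succ s a, M.SafeReachWithin T i t m ∧
        ∀ t' ∈ M.Succ s a, t' ≠ t → ∃ σ, M.SafeHist σ m t' := by
  constructor
  · rintro ⟨σ, _ | ⟨⟨a, t⟩, L⟩, hσ, hL, hlen, hlast⟩
    · exact absurd hlast hs
    obtain ⟨rfl, ht, hL⟩ := (M.compatHist_cons).1 hL
    obtain ⟨m, hm⟩ := M.exists_levelStep_eq_some hσ
    exact ⟨_, m, hm, t, ht,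
      ⟨_, L, M.safeHist_shiftStrat hσ ht hm, hL, by simpa using hlen, hlast⟩,
      fun t' ht' _ => ⟨_, M.safeHist_shiftStrat hσ ht' hm⟩⟩
  · rintro ⟨a, m, hm, t, ht, ⟨σ₀, L, hσ₀, hL, hlen, hlast⟩, hother⟩
    have : Nonempty (Strat S A) := ⟨fun _ => a⟩
    choose! τ hτ using hother
    refine ⟨consStrat a (Function.update τ t σ₀), (a, t) :: L,
      M.safeHist_consStrat hm fun u hu => ?_,
      (M.compatHist_consStrat_cons).2 ⟨rfl, ht, by simpa using hL⟩, by simpa using hlen, hlast⟩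
    by_cases hut : u = t
    · subst hut
      simpa using hσ₀
    · simpa [hut] using hτ u hu hut

theorem safeReachWithin_succ_iff_opB_le {i m : ℕ} (hm : m ≤ M.cap) :
    M.SafeReachWithin T (i + 1) s m ↔ M.opB T (M.safePRBdd T i) s ≤ m := by
  rw [opB, M.trunc2_le_iff hm, opA]
  split_ifs with hs
  · rw [M.safeReachWithin_of_mem hs, M.safeVec_le_refill_iff hm]
  · rw [M.safeReachWithin_succ_iff hs, ENat.iInf_le_natCast_iff]
    refine exists_congr fun a => ?_
    rw [spr_le_iff]
    refine exists_congr fun k => ?_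
    rw [levelStep_eq_some_iff]
    refine and_congr_right fun hk => ?_
    have hkc : k ≤ M.cap := by have := M.refill_le_cap (s := s) hm; omega
    simp only [M.safePRBdd_le_iff hkc, M.safeVec_le_iff hkc]

end Reachability

theorem safePRBdd_succ (T : Set S) (i : ℕ) :
    M.safePRBdd T (i + 1) = M.opB T (M.safePRBdd T i) := by
  funext s
  refine ENat.eq_of_forall_le_natCast_iff (c := M.cap) ?_ (M.trunc2_le_cap_or_eq_top _ s)
    fun m hm => ?_
  · rw [safePRBdd_eq_biInf]
    exact biInf_natCast_le_or_eq_top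
  · rw [M.safePRBdd_le_iff hm, M.safeReachWithin_succ_iff_opB_le hm]

theorem safePRBdd_zero (T : Set S) : M.safePRBdd T 0 = M.yTvec T := by
  funext s
  rw [safePRBdd_eq_biInf, yTvec]
  split_ifs with hs
  · simp only [M.safeReachWithin_of_mem hs, safeVec_eq_biInf]
  · simp [M.not_safeReachWithin_zero hs]

theorem opB_iterate_yTvec (T : Set S) (n : ℕ) :
    (M.opB T)^[n] (M.yTvec T) = M.safePRBdd T n := by
  induction n with
  | zero => exact (M.safePRBdd_zero T).symm
  | succ n ih => rw [Function.iterate_succ_apply', ih, safePRBdd_succ]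

theorem exists_shorter_of_hasRemovableCycle {T : Set S} {σ : Strat S A} {s : S} {ℓ : ℕ}
    {L : List (A × S)} (hσ : M.SafeHist σ ℓ s) (hL : M.CompatHist σ s L)
    (hlast : lastState s L ∈ T) (hcyc : HasRemovableCycle M.R (s :: L.map Prod.snd)) :
    ∃ σ' L', M.SafeHist σ' ℓ s ∧ M.CompatHist σ' s L' ∧ lastState s L' ∈ T ∧
      L'.length < L.length := by
  obtain ⟨P, mid, Q, x, hZ, hx⟩ := hcyc
  obtain ⟨A₁, L₂, rfl, -, hA₁, hL₂⟩ := exists_split_of_states_eq hZ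
  obtain ⟨A₂, A₃, rfl, hA₂, hA₂x, -⟩ :=
    exists_split_of_states_eq (s := x) (P := x :: mid) (by rw [hL₂]; rfl)
  rw [← List.append_assoc] at hL hlast
  have h12 := ((M.compatHist_append).1 hL).1
  have hloop : lastState s (A₁ ++ A₂) = lastState s A₁ := by rw [lastState_append, hA₁, hA₂x]
  refine ⟨skipCycle σ s A₁ A₂, A₁ ++ A₃, M.safeHist_skipCycle hσ h12 hloop ?_,
    (M.compatHist_skipCycle_append_iff h12 hloop).2 hL, ?_, ?_⟩
  · rw [hA₁, hA₂]
    exact hx.imp_right fun h y hy => by aesop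
  · rwa [lastState_append, ← hloop, ← lastState_append]
  · have := congrArg List.length hA₂
    simp only [List.length_cons, List.length_map, List.length_append] at this ⊢
    omega

def reachBound : ℕ := M.R.ncard + (M.R.ncard + 1) * (Fintype.card S - M.R.ncard + 1)

theorem safeReachWithin_reachBound {T : Set S} {s : S} {ℓ : ℕ} :
    ∀ {i : ℕ}, M.SafeReachWithin T i s ℓ → M.SafeReachWithin T M.reachBound s ℓ
  | 0, ⟨σ, L, hσ, hL, hlen, hlast⟩ => ⟨σ, L, hσ, hL, by omega, hlast⟩
  | i + 1, ⟨σ, L, hσ, hL, hlen, hlast⟩ => by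
    by_cases hK : L.length ≤ M.reachBound
    · exact ⟨σ, L, hσ, hL, hK, hlast⟩
    have hlong : (Fintype.card S - M.R.ncard) + (Fintype.card S - M.R.ncard + 1) * M.R.ncard <
        (s :: L.map Prod.snd).length := by
      have : (M.R.ncard + 1) * (Fintype.card S - M.R.ncard + 1) =
          (Fintype.card S - M.R.ncard + 1) * M.R.ncard + (Fintype.card S - M.R.ncard + 1) := by
        ring
      simp only [reachBound, List.length_cons, List.length_map] at hK ⊢
      omega
    obtain ⟨σ', L', hσ', hL', hlast', hlt⟩ := M.exists_shorter_of_hasRemovableCycle hσ hL hlast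
      (hasRemovableCycle_of_length_lt hlong)
    exact safeReachWithin_reachBound (i := i) ⟨σ', L', hσ', hL', by omega, hlast'⟩

theorem safePR_eq_safePRBdd_reachBound (T : Set S) : M.safePR T = M.safePRBdd T M.reachBound := by
  funext s
  have h : ∀ ℓ, (∃ i, M.SafeReachWithin T i s ℓ) ↔ M.SafeReachWithin T M.reachBound s ℓ :=
    fun ℓ => ⟨fun ⟨_, h⟩ => M.safeReachWithin_reachBound h, fun h => ⟨_, h⟩⟩
  simp only [safePR_eq_biInf, safePRBdd_eq_biInf, h]

end CMDP

open CMDP in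
/-- After `K = |R| + (|R|+1)·(|S|−|R|+1)` iterations, `B` reaches the safe
positive reachability vector. -/
theorem opB_iterate_K_eq_safePR {S A : Type} [Fintype S] (M : CMDP S A)
    (T : Set S) :
    (M.opB T)^[M.R.ncard + (M.R.ncard + 1) * (Fintype.card S - M.R.ncard + 1)]
        (M.yTvec T) = M.safePR T := by
  rw [M.opB_iterate_yTvec, M.safePR_eq_safePRBdd_reachBound, reachBound]
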